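/- Let G be a finite abelian group with |G| ≥ 2, f : G → ℝ a real-valued positive definite function, G₁ an abelian group, η : G₁ → Ĝ a group homomorphism, and S ⊆ G₁ with η(S) = supp(f̂) and |S| = |supp(f̂)|. Let h : G₁ → ℝ be a finitely supported, nonnegative, not identically zero function with μ := |supp(η_*(h))| < |G|, and let C > 0 be a real number such that (M_f^{G₁}(h))(z) ≥ C·h(z) for all z ∈ G₁. Then ν₂(f) ≥ ν₁(f) + |G|·(C − ν₁(f))/(|G| − μ). -/

import Mathlib

open Complex Finset

/-- The dual group `Ĝ = G →* ℂˣ` of a finite abelian group is finite. -/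
noncomputable instance instFintypeDual (G : Type*) [CommGroup G] [Fintype G] :
    Fintype (G →* ℂˣ) := by
  have : NeZero (Monoid.exponent G) := ⟨Monoid.exponent_ne_zero_of_finite⟩
  have : Finite (G →* ℂˣ) := by
    obtain ⟨e⟩ := CommGroup.monoidHom_mulEquiv_of_hasEnoughRootsOfUnity G ℂ
    exact Finite.of_equiv G e.symm.toEquiv
  exact Fintype.ofFinite _

/-- The Fourier transform of `f : G → ℂ`, as a function on the dual group `G →* ℂˣ`:
`f̂(χ) = (1/|G|) ∑_{x ∈ G} f(x) conj(χ(x))`. -/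
noncomputable def fourierT {G : Type*} [CommGroup G] [Fintype G] (f : G → ℂ) :
    (G →* ℂˣ) → ℂ :=
  fun χ => (Fintype.card G : ℂ)⁻¹ * ∑ x : G, f x * (starRingEnd ℂ) ((χ x : ℂ))

/-- Normalized inner product `⟨u,w⟩ = (1/|α|) ∑ u(χ) conj(w(χ))`. -/
noncomputable def inn {α : Type*} [Fintype α] (u w : α → ℂ) : ℂ :=
  (Fintype.card α : ℂ)⁻¹ * ∑ χ : α, u χ * (starRingEnd ℂ) (w χ)

/-- Normalized convolution `(u∗w)(χ) = (1/|α|) ∑_ρ u(χρ⁻¹) w(ρ)`. -/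
noncomputable def convol {α : Type*} [Group α] [Fintype α] (u w : α → ℂ) : α → ℂ :=
  fun χ => (Fintype.card α : ℂ)⁻¹ * ∑ ρ : α, u (χ * ρ⁻¹) * w ρ

/-- The Rayleigh quotient `R_f(v) = |G| ⟨f̂ ∗ v, v⟩ / ⟨v, v⟩`. -/
noncomputable def Rq {G : Type*} [CommGroup G] [Fintype G] (f : G → ℂ)
    (v : (G →* ℂˣ) → ℂ) : ℂ :=
  (Fintype.card G : ℂ) * inn (convol (fourierT f) v) v / inn v v

/-- `nu f k` is the `k`-th largest value (1-indexed, with multiplicity) of the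
real-valued function `f` on a finite type. -/
noncomputable def nu {G : Type*} [Fintype G] (f : G → ℝ) (k : ℕ) : ℝ :=
  ((Finset.univ.val.map f).sort (· ≤ ·)).getD (Fintype.card G - k) 0

/-- `f` is positive definite: every Fourier coefficient is a nonnegative real number. -/
def PosDef {G : Type*} [CommGroup G] [Fintype G] (f : G → ℂ) : Prop :=
  ∀ χ : G →* ℂˣ, (fourierT f χ).im = 0 ∧ 0 ≤ (fourierT f χ).re

open scoped BigOperators

/-!
Push `h` forward to `g = η_*(h)` on `Ĝ`. Summing the hypothesis over the fibres of `η`, and using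
`f̂ ≥ 0` and that `η` is injective on `S`, gives the convolution inequality `C g ≤ f̂ ∗ g` on `Ĝ`.
Pairing it with `g` and passing to `u(x) = ∑_ρ g(ρ) ρ(x)`, whose Fourier transform is `g`, turns it
into `|G| C ‖g‖² ≤ ∑_x f(x) |u(x)|²`. The right side is at most
`ν₂ ∑_x |u(x)|² + (ν₁ - ν₂) max_x |u(x)|²`; by Parseval the sum is `|G| ‖g‖²`, and by
Cauchy–Schwarz on the support of `g`, `|u(x)|² ≤ (∑ g)² ≤ μ ‖g‖²`. Dividing by `‖g‖² > 0` gives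
`|G| C ≤ (ν₁ - ν₂) μ + ν₂ |G|`, which rearranges to the claim.
-/

open ComplexConjugate

section DualGroup

variable {G : Type*} [CommGroup G] [Fintype G]

theorem norm_apply_char (χ : G →* ℂˣ) (x : G) : ‖(χ x : ℂ)‖ = 1 :=
  Complex.norm_eq_one_of_pow_eq_one (n := Fintype.card G)
    (by rw [← Units.val_pow_eq_pow_val, ← map_pow, pow_card_eq_one, map_one, Units.val_one])
    Fintype.card_ne_zero

theorem conj_apply_char (χ : G →* ℂˣ) (x : G) : conj (χ x : ℂ) = (χ⁻¹ x : ℂ) := by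
  rw [← Complex.inv_eq_conj (norm_apply_char χ x), MonoidHom.inv_apply, Units.val_inv_eq_inv_val]

theorem sum_apply_char (χ : G →* ℂˣ) [Decidable (χ = 1)] :
    ∑ x, (χ x : ℂ) = if χ = 1 then (Fintype.card G : ℂ) else 0 := by
  split_ifs with hχ
  · simp [hχ]
  · refine sum_hom_units_eq_zero ((Units.coeHom ℂ).comp χ) fun h => hχ ?_
    ext x
    exact congr($h x)

theorem card_mul_fourierT_mul_inv (f : G → ℂ) (χ ρ : G →* ℂˣ) :
    Fintype.card G * fourierT f (χ * ρ⁻¹) = ∑ x, f x * conj (χ x : ℂ) * ρ x := by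
  have hN : (Fintype.card G : ℂ) ≠ 0 := Nat.cast_ne_zero.mpr Fintype.card_ne_zero
  have hρ (x : G) : conj (ρ⁻¹ x : ℂ) = ρ x := by
    rw [conj_apply_char, MonoidHom.inv_apply, MonoidHom.inv_apply, inv_inv]
  simp only [fourierT, mul_inv_cancel_left₀ hN, MonoidHom.mul_apply, Units.val_mul, map_mul, hρ,
    mul_assoc]

theorem fourierT_one (σ : G →* ℂˣ) [Decidable (σ = 1)] :
    fourierT (fun _ => (1 : ℂ)) σ = if σ = 1 then 1 else 0 := by
  classical
  have hN : (Fintype.card G : ℂ) ≠ 0 := Nat.cast_ne_zero.mpr Fintype.card_ne_zero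
  have hinv : σ⁻¹ = 1 ↔ σ = 1 := by simp [MonoidHom.ext_iff]
  simp only [fourierT, one_mul, conj_apply_char]
  rw [sum_apply_char]
  simp [hinv, hN]

noncomputable def invFourierT (g : (G →* ℂˣ) → ℂ) : G → ℂ := fun x => ∑ ρ, g ρ * ρ x

theorem sum_mul_normSq_invFourierT (f : G → ℂ) (g : (G →* ℂˣ) → ℂ) :
    ∑ x, f x * normSq (invFourierT g x) =
      Fintype.card G * ∑ χ, ∑ ρ, fourierT f (χ * ρ⁻¹) * g ρ * conj (g χ) := by
  calc ∑ x, f x * (normSq (invFourierT g x) : ℂ)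
      = ∑ x, ∑ χ, ∑ ρ, f x * conj (χ x : ℂ) * ρ x * (g ρ * conj (g χ)) := by
        refine sum_congr rfl fun x _ => ?_
        rw [normSq_eq_conj_mul_self, invFourierT, map_sum, sum_mul_sum]
        simp only [mul_sum]
        refine sum_congr rfl fun χ _ => sum_congr rfl fun ρ _ => ?_
        rw [map_mul]
        ring
    _ = ∑ χ, ∑ ρ, (∑ x, f x * conj (χ x : ℂ) * ρ x) * (g ρ * conj (g χ)) := by
        rw [sum_comm]
        simp only [sum_mul]
        exact sum_congr rfl fun χ _ => sum_comm
    _ = _ := by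
        simp only [← card_mul_fourierT_mul_inv, mul_sum]
        refine sum_congr rfl fun χ _ => sum_congr rfl fun ρ _ => ?_
        ring

theorem sum_normSq_invFourierT (g : (G →* ℂˣ) → ℂ) :
    ∑ x, normSq (invFourierT g x) = Fintype.card G * ∑ χ, normSq (g χ) := by
  classical
  have hmul_inv (χ ρ : G →* ℂˣ) : χ * ρ⁻¹ = 1 ↔ ρ = χ := by
    rw [eq_comm (a := ρ)]
    exact mul_inv_eq_one (G := G →* ℂˣ)
  have h := sum_mul_normSq_invFourierT (fun _ => 1) g
  simp only [fourierT_one, hmul_inv, one_mul, ite_mul, zero_mul, sum_ite_eq', mem_univ, if_true,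
    mul_conj] at h
  exact_mod_cast h

theorem normSq_invFourierT_le (g : (G →* ℂˣ) → ℂ) (x : G) :
    normSq (invFourierT g x) ≤ (∑ χ, ‖g χ‖) ^ 2 := by
  rw [normSq_eq_norm_sq]
  gcongr
  refine (norm_sum_le _ _).trans_eq (sum_congr rfl fun χ _ => ?_)
  rw [norm_mul, norm_apply_char, mul_one]

end DualGroup

theorem List.SortedLE.countP_getElem_lt_le {α : Type*} [LinearOrder α] {l : List α}
    (hl : l.SortedLE) (i : ℕ) (hi : i < l.length) :
    l.countP (fun a => l[i] < a) ≤ l.length - (i + 1) := by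
  have htake : (l.take (i + 1)).countP (fun a => l[i] < a) = 0 := by
    refine List.countP_eq_zero.2 fun a ha => ?_
    obtain ⟨j, hj, rfl⟩ := List.mem_take_iff_getElem.1 ha
    simpa using hl.getElem_le_getElem_of_le (by omega : j ≤ i)
  calc l.countP (fun a => l[i] < a)
      = (l.take (i + 1) ++ l.drop (i + 1)).countP (fun a => l[i] < a) := by
        rw [List.take_append_drop]
    _ ≤ (l.drop (i + 1)).length := by
        rw [List.countP_append, htake, zero_add]
        exact List.countP_le_length
    _ = l.length - (i + 1) := List.length_drop

section OrderStatistics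

variable {α : Type*} [Fintype α] (f : α → ℝ)

noncomputable def sortedValues : List ℝ := (univ.val.map f).sort (· ≤ ·)

theorem nu_eq_getD (k : ℕ) : nu f k = (sortedValues f).getD (Fintype.card α - k) 0 := rfl

theorem length_sortedValues : (sortedValues f).length = Fintype.card α := by
  rw [sortedValues, Multiset.length_sort, Multiset.card_map, card_val, card_univ]

theorem sortedLE_sortedValues : (sortedValues f).SortedLE :=
  (Multiset.pairwise_sort _ _).sortedLE

theorem mem_sortedValues (x : α) : f x ∈ sortedValues f :=
  (Multiset.mem_sort _).2 (Multiset.mem_map_of_mem f (mem_univ_val x))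

theorem countP_sortedValues (p : ℝ → Prop) [DecidablePred p] :
    (sortedValues f).countP (fun a => p a) = #{x | p (f x)} := by
  rw [← Multiset.coe_countP, sortedValues, Multiset.sort_eq, Multiset.countP_map]
  rfl

theorem nu_two_le_nu_one : nu f 2 ≤ nu f 1 := by
  obtain hα | hα := Nat.eq_zero_or_pos (Fintype.card α)
  · have : sortedValues f = [] := List.length_eq_zero_iff.1 ((length_sortedValues f).trans hα)
    simp [nu_eq_getD, this]
  · have hlen := length_sortedValues f
    rw [nu_eq_getD, nu_eq_getD, List.getD_eq_getElem _ _ (by omega),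
      List.getD_eq_getElem _ _ (by omega)]
    exact (sortedLE_sortedValues f).getElem_le_getElem_of_le (by omega)

theorem le_nu_one (x : α) : f x ≤ nu f 1 := by
  have hlen := length_sortedValues f
  have hα : 0 < Fintype.card α := Fintype.card_pos_iff.2 ⟨x⟩
  obtain ⟨i, hi, hix⟩ := List.mem_iff_getElem.1 (mem_sortedValues f x)
  rw [nu_eq_getD, List.getD_eq_getElem _ _ (by omega), ← hix]
  exact (sortedLE_sortedValues f).getElem_le_getElem_of_le (by omega)

theorem le_nu_two_or {x y : α} (hxy : x ≠ y) : f x ≤ nu f 2 ∨ f y ≤ nu f 2 := by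
  classical
  by_contra! hlt
  have hlen := length_sortedValues f
  have hα : 2 ≤ Fintype.card α := Fintype.one_lt_card_iff.2 ⟨x, y, hxy⟩
  have hi : Fintype.card α - 2 < (sortedValues f).length := by omega
  have hν : nu f 2 = (sortedValues f)[Fintype.card α - 2] := List.getD_eq_getElem _ _ hi
  have hcount := (sortedLE_sortedValues f).countP_getElem_lt_le _ hi
  rw [← hν, countP_sortedValues f (nu f 2 < ·)] at hcount
  have hpair : {x, y} ⊆ ({z | nu f 2 < f z} : Finset α) := by
    simp [insert_subset_iff, hlt.1, hlt.2]
  have := card_le_card hpair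
  rw [card_pair hxy] at this
  omega

theorem sum_mul_le_nu [Nonempty α] (a : α → ℝ) (ha : ∀ x, 0 ≤ a x) {M : ℝ} (haM : ∀ x, a x ≤ M) :
    ∑ x, f x * a x ≤ (nu f 1 - nu f 2) * M + nu f 2 * ∑ x, a x := by
  classical
  obtain ⟨x₀, -, hx₀⟩ := exists_max_image univ f univ_nonempty
  have hrest : ∀ x ∈ univ.erase x₀, f x * a x ≤ nu f 2 * a x := fun x hx => by
    refine mul_le_mul_of_nonneg_right ?_ (ha x)
    rcases le_nu_two_or f (ne_of_mem_erase hx) with h | h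
    · exact h
    · exact (hx₀ x (mem_univ x)).trans h
  have hx₀ν : f x₀ * a x₀ ≤ nu f 1 * a x₀ :=
    mul_le_mul_of_nonneg_right (le_nu_one f x₀) (ha x₀)
  have hgap : (nu f 1 - nu f 2) * a x₀ ≤ (nu f 1 - nu f 2) * M :=
    mul_le_mul_of_nonneg_left (haM x₀) (sub_nonneg.2 (nu_two_le_nu_one f))
  rw [← add_sum_erase _ _ (mem_univ x₀), ← add_sum_erase _ _ (mem_univ x₀), mul_add,
    mul_sum]
  linarith [sum_le_sum hrest]

end OrderStatistics

section Pushforward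

variable {G₁ H : Type*} [Group G₁] [Group H] (η : G₁ →* H) (h : G₁ → ℝ)

noncomputable def pushforward (χ : H) : ℝ := ∑ᶠ z ∈ {z : G₁ | η z = χ}, h z

theorem pushforward_eq_sum_filter [DecidableEq H] {T : Finset G₁}
    (hT : Function.support h ⊆ T) (χ : H) :
    pushforward η h χ = ∑ z ∈ T with η z = χ, h z :=
  finsum_mem_eq_sum_of_subset _ (fun z hz => by simpa using And.intro (hT hz.2) hz.1)
    (fun z hz => (mem_filter.1 hz).2)

variable {h}

theorem sum_filter_le_pushforward (hh : (Function.support h).Finite) (hpos : ∀ z, 0 ≤ h z)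
    [DecidableEq H] (V : Finset G₁) (χ : H) :
    ∑ z ∈ V with η z = χ, h z ≤ pushforward η h χ := by
  classical
  rw [pushforward_eq_sum_filter η h (T := V ∪ hh.toFinset)
    (fun z hz => mem_union_right _ (hh.mem_toFinset.2 hz))]
  exact sum_le_sum_of_subset_of_nonneg (filter_subset_filter _ subset_union_left)
    fun z _ _ => hpos z

theorem le_pushforward (hh : (Function.support h).Finite) (hpos : ∀ z, 0 ≤ h z) (z : G₁) :
    h z ≤ pushforward η h (η z) := by
  classical
  have := sum_filter_le_pushforward η hh hpos {z} (η z)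
  rwa [filter_singleton, if_pos rfl, sum_singleton] at this

theorem pushforward_nonneg (hpos : ∀ z, 0 ≤ h z) (χ : H) : 0 ≤ pushforward η h χ :=
  finsum_nonneg fun z => finsum_nonneg fun _ => hpos z

theorem pushforward_comp_mul_left (w : G₁) (χ : H) :
    pushforward η (fun z => h (w * z)) χ = pushforward η h (η w * χ) := by
  refine finsum_mem_eq_of_bijOn (w * ·) ⟨fun z hz => ?_, (mul_right_injective w).injOn,
    fun z hz => ⟨w⁻¹ * z, ?_, mul_inv_cancel_left w z⟩⟩ fun z _ => rfl
  all_goals simp_all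

theorem mul_pushforward_le_sum [Fintype H] (hh : (Function.support h).Finite)
    (hpos : ∀ z, 0 ≤ h z) {S : Finset G₁} (hS : Set.InjOn η S) {w : H → ℝ} (hw : ∀ σ, 0 ≤ w σ)
    {C : ℝ} (hC : ∀ z, C * h z ≤ ∑ s ∈ S, w (η s) * h (s * z)) (χ : H) :
    C * pushforward η h χ ≤ ∑ σ, w σ * pushforward η h (σ * χ) := by
  classical
  set T := hh.toFinset
  calc C * pushforward η h χ
      = ∑ z ∈ T with η z = χ, C * h z := by
        rw [pushforward_eq_sum_filter η h (fun z hz => hh.mem_toFinset.2 hz), mul_sum]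
    _ ≤ ∑ z ∈ T with η z = χ, ∑ s ∈ S, w (η s) * h (s * z) := sum_le_sum fun z _ => hC z
    _ = ∑ s ∈ S, w (η s) * ∑ z ∈ T with η z = χ, h (s * z) := by
        rw [sum_comm]
        simp only [mul_sum]
    _ ≤ ∑ s ∈ S, w (η s) * pushforward η h (η s * χ) := by
        refine sum_le_sum fun s _ => mul_le_mul_of_nonneg_left ?_ (hw _)
        rw [← pushforward_comp_mul_left]
        exact sum_filter_le_pushforward η (hh.preimage (mul_right_injective s).injOn)
          (fun z => hpos _) T χ
    _ = ∑ σ ∈ S.image η, w σ * pushforward η h (σ * χ) :=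
        (sum_image (f := fun σ => w σ * pushforward η h (σ * χ)) hS).symm
    _ ≤ ∑ σ, w σ * pushforward η h (σ * χ) :=
        sum_le_sum_of_subset_of_nonneg (subset_univ _)
          fun σ _ _ => mul_nonneg (hw σ) (pushforward_nonneg η hpos _)

end Pushforward

theorem sq_sum_le_ncard_support_mul_sum_sq {ι : Type*} [Fintype ι] (g : ι → ℝ) :
    (∑ i, g i) ^ 2 ≤ (Function.support g).ncard * ∑ i, g i ^ 2 := by
  classical
  have hsupp : (Function.support g).ncard = #{i | g i ≠ 0} := by
    rw [← Set.ncard_coe_finset, coe_filter]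
    simp [Function.support]
  calc (∑ i, g i) ^ 2 = (∑ i with g i ≠ 0, g i) ^ 2 := by rw [sum_filter_ne_zero]
    _ ≤ #{i | g i ≠ 0} * ∑ i with g i ≠ 0, g i ^ 2 := sq_sum_le_card_mul_sum_sq
    _ ≤ (Function.support g).ncard * ∑ i, g i ^ 2 := by
        rw [hsupp]
        exact mul_le_mul_of_nonneg_left
          (sum_le_sum_of_subset_of_nonneg (subset_univ _) fun i _ _ => sq_nonneg _)
          (Nat.cast_nonneg _)

theorem card_mul_le_of_le_convolution {G : Type*} [CommGroup G] [Fintype G] (f : G → ℝ)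
    {g : (G →* ℂˣ) → ℝ} (hg0 : ∀ χ, 0 ≤ g χ) (hg : g ≠ 0) {C : ℝ}
    (hC : ∀ χ, C * g χ ≤ ∑ ρ, (fourierT (fun x => (f x : ℂ)) (χ * ρ⁻¹)).re * g ρ) :
    Fintype.card G * C ≤
      (nu f 1 - nu f 2) * (Function.support g).ncard + nu f 2 * Fintype.card G := by
  set N : ℝ := (Fintype.card G : ℝ)
  set u := invFourierT fun χ => (g χ : ℂ)
  set energy := ∑ χ, g χ ^ 2
  have hquad : ∑ x, f x * normSq (u x) =
      N * ∑ χ, (∑ ρ, (fourierT (fun x => (f x : ℂ)) (χ * ρ⁻¹)).re * g ρ) * g χ := by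
    have := congrArg re (sum_mul_normSq_invFourierT (fun x => (f x : ℂ)) fun χ => (g χ : ℂ))
    simpa [re_sum, conj_ofReal, ← ofReal_mul, sum_mul, mul_assoc] using this
  have hparseval : ∑ x, normSq (u x) = N * energy := by
    simpa [normSq_ofReal, ← sq] using sum_normSq_invFourierT fun χ => (g χ : ℂ)
  have hpeak (x : G) : normSq (u x) ≤ (Function.support g).ncard * energy := by
    refine (normSq_invFourierT_le _ x).trans
      (le_of_eq_of_le ?_ (sq_sum_le_ncard_support_mul_sum_sq g))
    simp [abs_of_nonneg (hg0 _)]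
  have henergy : 0 < energy := by
    obtain ⟨χ, hχ⟩ := Function.ne_iff.1 hg
    exact lt_of_lt_of_le (pow_pos ((hg0 χ).lt_of_ne' hχ) 2)
      (single_le_sum (fun ρ _ => sq_nonneg (g ρ)) (mem_univ χ))
  have hlower : N * (C * energy) ≤ ∑ x, f x * normSq (u x) := by
    rw [hquad, mul_sum]
    refine mul_le_mul_of_nonneg_left (sum_le_sum fun χ _ => ?_) (Nat.cast_nonneg _)
    rw [sq, ← mul_assoc]
    exact mul_le_mul_of_nonneg_right (hC χ) (hg0 χ)
  have hupper := sum_mul_le_nu f _ (fun x => normSq_nonneg (u x)) hpeak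
  rw [hparseval] at hupper
  refine le_of_mul_le_mul_right ?_ henergy
  linarith

theorem stmt_6_general (G : Type*) [CommGroup G] [Fintype G]
    (f : G → ℝ) (hf : PosDef (fun x => (f x : ℂ)))
    (G₁ : Type*) [CommGroup G₁] (η : G₁ →* (G →* ℂˣ))
    (S : Finset G₁)
    (hS : (η : G₁ → (G →* ℂˣ)) '' (S : Set G₁) =
      Function.support (fourierT (fun x => (f x : ℂ))))
    (hcard : S.card = (Function.support (fourierT (fun x => (f x : ℂ)))).ncard)
    (h : G₁ → ℝ) (hh : (Function.support h).Finite)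
    (hpos : ∀ z, 0 ≤ h z) (hne : h ≠ 0)
    (μ : ℕ)
    (hμ : μ = (Function.support
      (fun χ : G →* ℂˣ => ∑ᶠ z ∈ {z : G₁ | η z = χ}, h z)).ncard)
    (hμlt : μ < Fintype.card G)
    (C : ℝ)
    (hC : ∀ z : G₁, C * h z ≤
      ∑ w ∈ S, (fourierT (fun x => (f x : ℂ)) ((η w)⁻¹)).re * h (w * z)) :
    nu f 2 ≥ nu f 1 +
      (Fintype.card G : ℝ) * (C - nu f 1) / ((Fintype.card G : ℝ) - μ) := by
  classical
  set F := fourierT fun x => (f x : ℂ)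
  have hinj : Set.InjOn η S := by
    refine injOn_of_card_image_eq ?_
    rw [hcard, ← hS, ← coe_image, Set.ncard_coe_finset]
  have hconv (χ : G →* ℂˣ) :
      C * pushforward η h χ ≤ ∑ ρ, (F (χ * ρ⁻¹)).re * pushforward η h ρ := by
    refine (mul_pushforward_le_sum η hh hpos hinj (w := fun σ => (F σ⁻¹).re)
      (fun σ => (hf σ⁻¹).2) hC χ).trans_eq ?_
    refine Fintype.sum_equiv (Equiv.mulRight χ) _ _ fun σ => ?_
    have hσ : χ * (σ * χ)⁻¹ = σ⁻¹ := by
      ext x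
      simp
    simp only [Equiv.coe_mulRight, hσ]
  have hg : pushforward η h ≠ 0 := by
    obtain ⟨z, hz⟩ := Function.ne_iff.1 hne
    have hz' : 0 < h z := (hpos z).lt_of_ne' hz
    exact Function.ne_iff.2 ⟨η z, (hz'.trans_le (le_pushforward η hh hpos z)).ne'⟩
  have hsupp : (Function.support (pushforward η h)).ncard = μ := hμ.symm
  have key := card_mul_le_of_le_convolution f (pushforward_nonneg η hpos) hg hconv
  rw [hsupp] at key
  have hgap : (0 : ℝ) < Fintype.card G - μ := sub_pos.2 (Nat.cast_lt.2 hμlt)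
  rw [ge_iff_le, ← le_sub_iff_add_le', div_le_iff₀ hgap]
  linarith

/-- general lower bound for `ν₂(f)` obtained from the covering argument. -/
theorem stmt_6 (G : Type*) [CommGroup G] [Fintype G] (hG : 2 ≤ Fintype.card G)
    (f : G → ℝ) (hf : PosDef (fun x => (f x : ℂ)))
    (G₁ : Type*) [CommGroup G₁] (η : G₁ →* (G →* ℂˣ))
    (S : Finset G₁)
    (hS : (η : G₁ → (G →* ℂˣ)) '' (S : Set G₁) =
      Function.support (fourierT (fun x => (f x : ℂ))))
    (hcard : S.card = (Function.support (fourierT (fun x => (f x : ℂ)))).ncard)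
    (h : G₁ → ℝ) (hh : (Function.support h).Finite)
    (hpos : ∀ z, 0 ≤ h z) (hne : h ≠ 0)
    (μ : ℕ)
    (hμ : μ = (Function.support
      (fun χ : G →* ℂˣ => ∑ᶠ z ∈ {z : G₁ | η z = χ}, h z)).ncard)
    (hμlt : μ < Fintype.card G)
    (C : ℝ) (hCpos : 0 < C)
    (hC : ∀ z : G₁, C * h z ≤
      ∑ w ∈ S, (fourierT (fun x => (f x : ℂ)) ((η w)⁻¹)).re * h (w * z)) :
    nu f 2 ≥ nu f 1 +
      (Fintype.card G : ℝ) * (C - nu f 1) / ((Fintype.card G : ℝ) - μ) :=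
  stmt_6_general G f hf G₁ η S hS hcard h hh hpos hne μ hμ hμlt C hC
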